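/- (Proposition 6, Max-Sum scheme as a limit) Fix positive reals a, b, L_1, L_2, γ_th and positive integers K, N, and define G_d = K·N·a/2 and G_c = (K·a·Γ(K·a))^{2/(K·a)} · b² / (K·L_1² L_2² · γ_th). Let F(γ̄) = ( Υ(K·a, √(K·(L_1² L_2² / b²)·(γ_th/γ̄))) / Γ(K·a) )^{N} for γ̄ > 0. Then F(γ̄) · (G_c · γ̄)^{G_d} → 1 as γ̄ → ∞; that is, the outage probability of the Max-Sum scheme behaves asymptotically as (G_c · γ̄)^{−G_d} in the high-SNR regime. -/

import Mathlib

/-!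
On `[0, x]` we have `e^{-x} t^{s-1} ≤ t^{s-1} e^{-t} ≤ t^{s-1}`, so `Υ(s, x)` is squeezed between
`e^{-x} x^s / s` and `x^s / s`; hence `Υ(s, x) ~ x^s / s` as `x → 0⁺`. Along `x = √(c / γ̄)` the
product `x^s γ̄^{s/2} = c^{s/2}` is constant, and `G_c` is precisely the constant for which
`Υ(s, x) / Γ(s) · (G_c γ̄)^{s/2} → 1`; the `N`-th power of this is the claim.
-/

open Filter Topology intervalIntegral

/-- The lower incomplete Gamma function `Υ(s, x) = ∫_0^x t^(s-1) e^(-t) dt`. -/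
noncomputable def lowerIncGamma (s x : ℝ) : ℝ :=
  ∫ t in (0:ℝ)..x, t ^ (s - 1) * Real.exp (-t)

lemma integral_rpow_sub_one {s : ℝ} (hs : 0 < s) (x : ℝ) :
    ∫ t in (0:ℝ)..x, t ^ (s - 1) = x ^ s / s := by
  rw [integral_rpow (Or.inl (by linarith)), sub_add_cancel, Real.zero_rpow hs.ne', sub_zero]

lemma intervalIntegrable_rpow_sub_one_mul_exp_neg {s : ℝ} (hs : 0 < s) (x : ℝ) :
    IntervalIntegrable (fun t : ℝ => t ^ (s - 1) * Real.exp (-t)) MeasureTheory.volume 0 x :=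
  (intervalIntegrable_rpow' (by linarith)).mul_continuousOn (by fun_prop)

lemma lowerIncGamma_le {s x : ℝ} (hs : 0 < s) (hx : 0 ≤ x) :
    lowerIncGamma s x ≤ x ^ s / s := by
  rw [← integral_rpow_sub_one hs]
  refine integral_mono_on hx (intervalIntegrable_rpow_sub_one_mul_exp_neg hs x)
    (intervalIntegrable_rpow' (by linarith)) fun t ht => ?_
  exact mul_le_of_le_one_right (Real.rpow_nonneg ht.1 _) (Real.exp_le_one_iff.2 (by linarith [ht.1]))

lemma exp_neg_mul_le_lowerIncGamma {s x : ℝ} (hs : 0 < s) (hx : 0 ≤ x) :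
    Real.exp (-x) * (x ^ s / s) ≤ lowerIncGamma s x := by
  rw [← integral_rpow_sub_one hs, ← integral_const_mul]
  refine integral_mono_on hx ((intervalIntegrable_rpow' (by linarith)).const_mul _)
    (intervalIntegrable_rpow_sub_one_mul_exp_neg hs x) fun t ht => ?_
  rw [mul_comm]
  exact mul_le_mul_of_nonneg_left (Real.exp_le_exp.2 (by linarith [ht.2]))
    (Real.rpow_nonneg ht.1 _)

lemma tendsto_lowerIncGamma_div_rpow {s : ℝ} (hs : 0 < s) :
    Tendsto (fun x => lowerIncGamma s x / x ^ s) (𝓝[>] 0) (𝓝 (1 / s)) := by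
  have hexp : Tendsto (fun x : ℝ => Real.exp (-x) * (1 / s)) (𝓝[>] 0) (𝓝 (1 / s)) := by
    have h : Continuous fun x : ℝ => Real.exp (-x) * (1 / s) := by fun_prop
    simpa using (h.tendsto 0).mono_left nhdsWithin_le_nhds
  refine tendsto_of_tendsto_of_tendsto_of_le_of_le' hexp tendsto_const_nhds ?_ ?_ <;>
    filter_upwards [self_mem_nhdsWithin] with x (hx : 0 < x)
  · rw [le_div_iff₀ (Real.rpow_pos_of_pos hx s)]
    calc Real.exp (-x) * (1 / s) * x ^ s = Real.exp (-x) * (x ^ s / s) := by ring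
      _ ≤ lowerIncGamma s x := exp_neg_mul_le_lowerIncGamma hs hx.le
  · rw [div_le_iff₀ (Real.rpow_pos_of_pos hx s)]
    calc lowerIncGamma s x ≤ x ^ s / s := lowerIncGamma_le hs hx.le
      _ = 1 / s * x ^ s := by ring

lemma tendsto_sqrt_const_div_atTop {c : ℝ} (hc : 0 < c) :
    Tendsto (fun y : ℝ => Real.sqrt (c / y)) atTop (𝓝[>] 0) := by
  refine tendsto_nhdsWithin_iff.2 ⟨?_, ?_⟩
  · simpa [Function.comp_def] using (Real.continuous_sqrt.tendsto 0).comp (tendsto_const_nhds.div_atTop tendsto_id)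
  · filter_upwards [eventually_gt_atTop 0] with y hy
    exact Real.sqrt_pos.2 (div_pos hc hy)

lemma tendsto_lowerIncGamma_sqrt_const_div_mul_rpow {s c : ℝ} (hs : 0 < s) (hc : 0 < c) :
    Tendsto (fun y => lowerIncGamma s (Real.sqrt (c / y)) * y ^ (s / 2)) atTop
      (𝓝 (c ^ (s / 2) / s)) := by
  have h := ((tendsto_lowerIncGamma_div_rpow hs).comp (tendsto_sqrt_const_div_atTop hc)).mul_const
    (c ^ (s / 2))
  rw [one_div_mul_eq_div] at h
  refine h.congr' ?_
  filter_upwards [eventually_gt_atTop 0] with y hy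
  have hcy : 0 < c / y := div_pos hc hy
  have hsqrt : Real.sqrt (c / y) ^ s = c ^ (s / 2) / y ^ (s / 2) := by
    rw [Real.sqrt_eq_rpow, ← Real.rpow_mul hcy.le, Real.div_rpow hc.le hy.le]
    ring_nf
  have : 0 < y ^ (s / 2) := Real.rpow_pos_of_pos hy _
  have : 0 < c ^ (s / 2) := Real.rpow_pos_of_pos hc _
  simp only [Function.comp, hsqrt]
  field_simp

theorem stmt_16_general (a b L1 L2 γth : ℝ) (K N : ℕ)
    (ha : 0 < a) (hb : 0 < b) (hL1 : 0 < L1) (hL2 : 0 < L2) (hγth : 0 < γth)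
    (hK : 0 < K)
    (Gd Gc : ℝ) (hGd : Gd = K * N * a / 2)
    (hGc : Gc = ((K : ℝ) * a * Real.Gamma ((K : ℝ) * a)) ^ (2 / ((K : ℝ) * a)) * b ^ 2
        / ((K : ℝ) * L1 ^ 2 * L2 ^ 2 * γth))
    (F : ℝ → ℝ)
    (hF : ∀ γbar : ℝ, 0 < γbar → F γbar
        = (lowerIncGamma ((K : ℝ) * a)
              (Real.sqrt ((K : ℝ) * (L1 ^ 2 * L2 ^ 2 / b ^ 2) * (γth / γbar)))
            / Real.Gamma ((K : ℝ) * a)) ^ N) :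
    Tendsto (fun γbar : ℝ => F γbar * (Gc * γbar) ^ Gd) atTop (nhds 1) := by
  set s : ℝ := (K : ℝ) * a
  set c : ℝ := (K : ℝ) * (L1 ^ 2 * L2 ^ 2 / b ^ 2) * γth with hc_def
  have hs : 0 < s := by positivity
  have hc : 0 < c := by positivity
  have hΓ : 0 < Real.Gamma s := Real.Gamma_pos_of_pos hs
  have hcs : 0 < c ^ (s / 2) := Real.rpow_pos_of_pos hc _
  have hGc' : Gc = (s * Real.Gamma s) ^ (2 / s) / c := by rw [hGc, hc_def]; field_simp
  have hGc_pos : 0 < Gc := by rw [hGc']; positivity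
  have hGc_rpow : Gc ^ (s / 2) = s * Real.Gamma s / c ^ (s / 2) := by
    rw [hGc', Real.div_rpow (by positivity) hc.le, ← Real.rpow_mul (by positivity),
      show 2 / s * (s / 2) = 1 by field_simp, Real.rpow_one]
  have h := ((tendsto_lowerIncGamma_sqrt_const_div_mul_rpow hs hc).div_const
    (c ^ (s / 2) / s)).pow N
  rw [div_self (by positivity), one_pow] at h
  refine h.congr' ?_
  filter_upwards [eventually_gt_atTop 0] with y hy
  rw [hF y hy, show (K : ℝ) * (L1 ^ 2 * L2 ^ 2 / b ^ 2) * (γth / y) = c / y by ring,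
    show Gd = s / 2 * N by rw [hGd]; ring, Real.rpow_mul (by positivity), Real.rpow_natCast,
    ← mul_pow, Real.mul_rpow (by positivity) hy.le, hGc_rpow]
  field_simp

/-- Proposition 6, Max-Sum scheme: in the high-SNR regime the Max-Sum outage
probability behaves as `(G_c γ̄)^{-G_d}` with diversity gain `G_d = KNa/2` and coding gain
`G_c = (KaΓ(Ka))^{2/(Ka)} b² / (K L₁²L₂²γ_th)`. -/
theorem stmt_16 (a b L1 L2 γth : ℝ) (K N : ℕ)
    (ha : 0 < a) (hb : 0 < b) (hL1 : 0 < L1) (hL2 : 0 < L2) (hγth : 0 < γth)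
    (hK : 0 < K) (hN : 0 < N)
    (Gd Gc : ℝ) (hGd : Gd = K * N * a / 2)
    (hGc : Gc = ((K : ℝ) * a * Real.Gamma ((K : ℝ) * a)) ^ (2 / ((K : ℝ) * a)) * b ^ 2
        / ((K : ℝ) * L1 ^ 2 * L2 ^ 2 * γth))
    (F : ℝ → ℝ)
    (hF : ∀ γbar : ℝ, 0 < γbar → F γbar
        = (lowerIncGamma ((K : ℝ) * a)
              (Real.sqrt ((K : ℝ) * (L1 ^ 2 * L2 ^ 2 / b ^ 2) * (γth / γbar)))
            / Real.Gamma ((K : ℝ) * a)) ^ N) :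
    Tendsto (fun γbar : ℝ => F γbar * (Gc * γbar) ^ Gd) atTop (nhds 1) :=
  stmt_16_general a b L1 L2 γth K N ha hb hL1 hL2 hγth hK Gd Gc hGd hGc F hF
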